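/- arXiv:1808.09835 — 7 statements merged into one kernel-verified Lean document; each statement's English description precedes it below -/
import Mathlib

section
/- In a (strict) 2-category, suppose given 1-cells f : A → B, g : B → C, k : D → B, l : D → C, h : D → A, and 2-cells λ : f∘h ⇒ k and μ : g∘k ⇒ l, such that the pair (k, μ) is an absolute right lifting of l through g (i.e. pasting with μ gives a bijection between 2-cells b ⇒ k∘c and 2-cells g∘b ⇒ l∘c, naturally in c : X → D, b : X → B). Then (h, λ) is an absolute right lifting of k through f if and only if (h, (g∘λ) · μ) is an absolute right lifting of l through the composite g∘f. -/
open CategoryTheory CategoryTheory.Bicategory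

universe w v u

variable {B : Type u} [Bicategory.{w, v} B] [Bicategory.Strict B]

/-- In a strict 2-category, a 2-cell `lam : h ≫ f ⟶ k` (where `f : A ⟶ Bb`, `h : D ⟶ A`,
`k : D ⟶ Bb`) exhibits `(h, lam)` as an *absolute right lifting* of `k` through `f` if for
every object `X`, every `c : X ⟶ D`, `b : X ⟶ A` and 2-cell `α : b ≫ f ⟶ c ≫ k` there is a
unique 2-cell `ᾱ : b ⟶ c ≫ h` with `α = (ᾱ ▷ f) ≫ (α_ c h f).hom ≫ (c ◁ lam)`. -/
def IsAbsRightLifting {A D Bb : B} (f : A ⟶ Bb) (k : D ⟶ Bb) (h : D ⟶ A)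
    (lam : h ≫ f ⟶ k) : Prop :=
  ∀ (X : B) (c : X ⟶ D) (b : X ⟶ A) (α : b ≫ f ⟶ c ≫ k),
    ∃! abar : b ⟶ c ≫ h, α = (abar ▷ f) ≫ (α_ c h f).hom ≫ (c ◁ lam)

private lemma paste_aux {A D Bb C X : B}
    (f : A ⟶ Bb) (g : Bb ⟶ C) (k : D ⟶ Bb) (h : D ⟶ A)
    (lam : h ≫ f ⟶ k) {l : D ⟶ C} (μ : k ≫ g ⟶ l)
    (c : X ⟶ D) (b : X ⟶ A) (abar : b ⟶ c ≫ h) :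
    abar ▷ (f ≫ g) ≫ (α_ c h (f ≫ g)).hom ≫ c ◁ ((α_ h f g).inv ≫ lam ▷ g ≫ μ)
      = (α_ b f g).inv ≫ (abar ▷ f ≫ (α_ c h f).hom ≫ c ◁ lam) ▷ g
          ≫ (α_ c k g).hom ≫ c ◁ μ := by
  simp [Bicategory.Strict.associator_eqToIso]

/-- Composition and cancellation of absolute right lifting diagrams: given
`f : A ⟶ Bb`, `g : Bb ⟶ C`, `k : D ⟶ Bb`, `l : D ⟶ C`, `h : D ⟶ A` and 2-cells
`lam : h ≫ f ⟶ k`, `μ : k ≫ g ⟶ l` such that `(k, μ)` is an absolute right lifting of `l`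
through `g`, the pair `(h, lam)` is an absolute right lifting of `k` through `f` if and only
if `(h, (g ∘ lam) · μ)` is an absolute right lifting of `l` through the composite `f ≫ g`. -/
theorem absRightLifting_comp_cancel {A D Bb C : B}
    (f : A ⟶ Bb) (g : Bb ⟶ C) (k : D ⟶ Bb) (l : D ⟶ C) (h : D ⟶ A)
    (lam : h ≫ f ⟶ k) (μ : k ≫ g ⟶ l)
    (hμ : IsAbsRightLifting g l k μ) :
    IsAbsRightLifting f k h lam ↔
      IsAbsRightLifting (f ≫ g) l h ((α_ h f g).inv ≫ (lam ▷ g) ≫ μ) := by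
  constructor
  · intro hlam X c b α
    obtain ⟨β, hβ, hβu⟩ := hμ X c (b ≫ f) ((α_ b f g).hom ≫ α)
    obtain ⟨abar, habar, habaru⟩ := hlam X c b β
    refine ⟨abar, ?_, ?_⟩
    · beta_reduce
      rw [paste_aux f g k h lam μ c b abar, ← habar, ← hβ, Iso.inv_hom_id_assoc]
    · intro y hy
      refine habaru y (hβu (y ▷ f ≫ (α_ c h f).hom ≫ c ◁ lam) ?_).symm
      rw [hy, paste_aux f g k h lam μ c b y, Iso.hom_inv_id_assoc]
  · intro H X c b α
    obtain ⟨abar, habar, habaru⟩ := H X c b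
      ((α_ b f g).inv ≫ α ▷ g ≫ (α_ c k g).hom ≫ c ◁ μ)
    obtain ⟨β, hβ, hβu⟩ := hμ X c (b ≫ f) (α ▷ g ≫ (α_ c k g).hom ≫ c ◁ μ)
    have h1 : α = β := hβu α rfl
    have h2 : abar ▷ f ≫ (α_ c h f).hom ≫ c ◁ lam = β := by
      refine hβu _ ?_
      have := habar.trans (paste_aux f g k h lam μ c b abar)
      rwa [cancel_epi (α_ b f g).inv] at this
    refine ⟨abar, by rw [h1, ← h2], ?_⟩
    intro y hy
    refine habaru y ?_
    beta_reduce
    rw [paste_aux f g k h lam μ c b y, ← hy]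
end

section
/- In a 2-category, a 1-cell u : A → B admits a left adjoint f : B → A with counit ε : f∘u ⇒ id_A if and only if the triangle with top u : A → B, right edge f : B → A, bottom identity id_A : A → A, and 2-cell ε exhibits u as an absolute right lifting of id_A through f. -/
/-!
If `f ⊣ u`, pasting with the counit is inverted by `α ↦ g ◁ η ⊗≫ α ▷ u`: one composite is the
identity by the left triangle identity, the other by the right one. Conversely, if `ε` is an
absolute right lifting, let `η` be the lift of the unitor `𝟙 b ≫ f ≅ f ≫ 𝟙 a`; the lifting
equation for `η` is the left triangle identity. Using it, the right zigzag and the identity of `u`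
both paste with `ε` to `ε`, so uniqueness of lifts gives the right triangle identity.
-/

open CategoryTheory CategoryTheory.Bicategory

universe w v u

variable {B : Type u} [Bicategory.{w, v} B] [Bicategory.Strict B]

namespace CategoryTheory.Bicategory

variable {𝒞 : Type*} [Bicategory 𝒞] {a b x : 𝒞} {f : b ⟶ a} {u : a ⟶ b}

namespace Adjunction

variable (adj : f ⊣ u) {c : x ⟶ a} {g : x ⟶ b}

def liftCounit (α : g ≫ f ⟶ c ≫ 𝟙 a) : g ⟶ c ≫ u :=
  𝟙 _ ⊗≫ g ◁ adj.unit ⊗≫ α ▷ u ⊗≫ 𝟙 _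

theorem liftCounit_fac (α : g ≫ f ⟶ c ≫ 𝟙 a) :
    adj.liftCounit α ▷ f ≫ (α_ c u f).hom ≫ c ◁ adj.counit = α :=
  calc _
    _ = 𝟙 _ ⊗≫ (g ◁ adj.unit) ▷ f ⊗≫ ((g ≫ f) ◁ adj.counit ≫ α ▷ 𝟙 a) ⊗≫ 𝟙 _ := by
      rw [whisker_exchange, liftCounit]; bicategory
    _ = 𝟙 _ ⊗≫ g ◁ leftZigzag adj.unit adj.counit ⊗≫ α ⊗≫ 𝟙 _ := by
      rw [leftZigzag]; bicategory
    _ = α := by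
      rw [adj.left_triangle]; bicategory

theorem liftCounit_whiskerRight_comp_counit (β : g ⟶ c ≫ u) :
    adj.liftCounit (β ▷ f ≫ (α_ c u f).hom ≫ c ◁ adj.counit) = β :=
  calc _
    _ = 𝟙 _ ⊗≫ (β ▷ 𝟙 b ≫ (c ≫ u) ◁ adj.unit) ⊗≫ (c ◁ adj.counit) ▷ u ⊗≫ 𝟙 _ := by
      rw [← whisker_exchange, liftCounit]; bicategory
    _ = 𝟙 _ ⊗≫ β ⊗≫ c ◁ rightZigzag adj.unit adj.counit ⊗≫ 𝟙 _ := by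
      rw [rightZigzag]; bicategory
    _ = β := by
      rw [adj.right_triangle]; bicategory

end Adjunction

theorem rightZigzag_whiskerRight_comp_eq_of_leftZigzag_eq
    {η : 𝟙 b ⟶ f ≫ u} {ε' : u ≫ f ⟶ 𝟙 a}
    (hleft : leftZigzag η ε' = (λ_ f).hom ≫ (ρ_ f).inv) :
    rightZigzag η ε' ▷ f ≫ (α_ (𝟙 a) u f).hom ≫ 𝟙 a ◁ ε' =
      ((ρ_ u).hom ≫ (λ_ u).inv) ▷ f ≫ (α_ (𝟙 a) u f).hom ≫ 𝟙 a ◁ ε' :=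
  calc _
    _ = 𝟙 _ ⊗≫ u ◁ η ▷ f ⊗≫ ((u ≫ f) ◁ ε' ≫ ε' ▷ 𝟙 a) ⊗≫ 𝟙 _ := by
      rw [whisker_exchange, rightZigzag]; bicategory
    _ = 𝟙 _ ⊗≫ u ◁ leftZigzag η ε' ⊗≫ ε' ⊗≫ 𝟙 _ := by
      rw [leftZigzag]; bicategory
    _ = _ := by
      rw [hleft]; bicategory

end CategoryTheory.Bicategory

section

variable {A D Bb : B} {f : A ⟶ Bb}

theorem IsAbsRightLifting.hom_ext {k : D ⟶ Bb} {h : D ⟶ A} {lam : h ≫ f ⟶ k}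
    (H : IsAbsRightLifting f k h lam) {X : B} {c : X ⟶ D} {b : X ⟶ A} {β₁ β₂ : b ⟶ c ≫ h}
    (e : β₁ ▷ f ≫ (α_ c h f).hom ≫ c ◁ lam = β₂ ▷ f ≫ (α_ c h f).hom ≫ c ◁ lam) :
    β₁ = β₂ :=
  (H X c b _).unique rfl e

theorem CategoryTheory.Bicategory.Adjunction.isAbsRightLifting {u : Bb ⟶ A} (adj : f ⊣ u) :
    IsAbsRightLifting f (𝟙 Bb) u adj.counit := fun _ _ _ α =>
  ⟨adj.liftCounit α, (adj.liftCounit_fac α).symm, fun β hβ => by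
    rw [hβ, adj.liftCounit_whiskerRight_comp_counit]⟩

theorem IsAbsRightLifting.exists_adjunction {u : Bb ⟶ A} {ε' : u ≫ f ⟶ 𝟙 Bb}
    (H : IsAbsRightLifting f (𝟙 Bb) u ε') : ∃ adj : f ⊣ u, adj.counit = ε' := by
  obtain ⟨η, hη, -⟩ := H A f (𝟙 A) ((λ_ f).hom ≫ (ρ_ f).inv)
  have hleft : leftZigzag η ε' = (λ_ f).hom ≫ (ρ_ f).inv := by
    rw [hη, leftZigzag]; bicategory
  have hright := H.hom_ext (rightZigzag_whiskerRight_comp_eq_of_leftZigzag_eq hleft)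
  exact ⟨⟨η, ε', hleft, hright⟩, rfl⟩

end

/-- A 1-cell `u : A ⟶ B` admits a left adjoint `f` with counit `ε : u ≫ f ⟶ 𝟙 A` if and only
if `ε` exhibits `u` as an absolute right lifting of the identity `𝟙 A` through `f`. -/
theorem leftAdjoint_iff_absRightLifting {A Bb : B} (u : A ⟶ Bb) (f : Bb ⟶ A)
    (ε' : u ≫ f ⟶ 𝟙 A) :
    (∃ adj : Bicategory.Adjunction f u, adj.counit = ε') ↔
      IsAbsRightLifting f (𝟙 A) u ε' :=
  ⟨fun ⟨adj, hadj⟩ => hadj ▸ adj.isAbsRightLifting, IsAbsRightLifting.exists_adjunction⟩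
end

section
/- Let F : C ⥤ D be a functor between (1-)categories that is fully faithful and strongly generating, where strongly generating means: a morphism β : b ⟶ c in D is an isomorphism whenever for every object a of C the postcomposition map Hom_D(F a, b) → Hom_D(F a, c) given by β is a bijection. Let J be a small category and d : J ⥤ C a diagram admitting a limit ℓ in C, and suppose the composite diagram d ⋙ F admits a limit ℓ' in D. Then the canonical comparison map F ℓ → ℓ' is an isomorphism; i.e. F preserves the limit of d. -/
open CategoryTheory CategoryTheory.Limits

/-- A functor `F` is *strongly generating* if a morphism `β` of the target category is an
isomorphism whenever postcomposition with `β` on homs out of objects in the image of `F`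
is always a bijection. -/
def StronglyGenerating {C : Type u₁} [Category.{v₁} C] {D : Type u₂} [Category.{v₂} D]
    (F : C ⥤ D) : Prop :=
  ∀ ⦃b c : D⦄ (β : b ⟶ c),
    (∀ a : C, Function.Bijective (fun φ : F.obj a ⟶ b => φ ≫ β)) → IsIso β

/-- A fully faithful and strongly generating functor preserves any limit that exists in its
domain, provided the image diagram has a limit in the codomain: the canonical comparison
map from the image of the limit to the limit of the image diagram is an isomorphism. -/
theorem fullyFaithful_stronglyGenerating_preserves_limit
    {C : Type u₁} [Category.{v₁} C] {D : Type u₂} [Category.{v₂} D]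
    (F : C ⥤ D) [F.Full] [F.Faithful] (hsg : StronglyGenerating F)
    {J : Type w} [SmallCategory J] (d : J ⥤ C)
    (c : Cone d) (hc : IsLimit c)
    (c' : Cone (d ⋙ F)) (hc' : IsLimit c') :
    IsIso (hc'.lift (F.mapCone c)) := by
  set β := hc'.lift (F.mapCone c) with hβ
  have hfac : ∀ j, β ≫ c'.π.app j = F.map (c.π.app j) := fun j => hc'.fac _ j
  apply hsg
  intro a
  constructor
  · intro φ₁ φ₂ h
    dsimp at h
    have h1 : ∀ j, φ₁ ≫ F.map (c.π.app j) = φ₂ ≫ F.map (c.π.app j) := by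
      intro j
      rw [← hfac j, ← Category.assoc, ← Category.assoc, h]
    obtain ⟨ψ₁, rfl⟩ := F.map_surjective φ₁
    obtain ⟨ψ₂, rfl⟩ := F.map_surjective φ₂
    congr 1
    apply hc.hom_ext
    intro j
    apply F.map_injective
    simpa using h1 j
  · intro χ
    -- build a cone over d with point a
    let s : Cone d :=
      { pt := a
        π :=
          { app := fun j => F.preimage (χ ≫ c'.π.app j)
            naturality := by
              intro j j' f
              apply F.map_injective
              simp [Functor.map_comp]
              rw [← c'.w f]
              simp } }
    refine ⟨F.map (hc.lift s), ?_⟩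
    dsimp
    apply hc'.hom_ext
    intro j
    rw [Category.assoc, hfac j, ← F.map_comp, hc.fac s j]
    simp [s]
end

section
/- A simplicial set X is κ-presentable (a κ-compact object of the category of simplicial sets, for κ a regular uncountable cardinal) if and only if its set of nondegenerate simplices has cardinality < κ. -/
open CategoryTheory CategoryTheory.Limits Opposite Simplicial

universe u

/-- A simplex `x ∈ X_n` of a simplicial set is *degenerate* if it is the image of a simplex
of strictly smaller dimension under some simplicial operator. -/
def SSet.IsDegenerateSimplex (X : SSet.{u}) (n : ℕ) (x : X.obj (op ⦋n⦌)) : Prop :=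
  ∃ (m : ℕ) (_ : m < n) (f : (⦋n⦌ : SimplexCategory) ⟶ ⦋m⦌) (y : X.obj (op ⦋m⦌)),
    x = X.map f.op y

/-- The type of nondegenerate simplices (of all dimensions) of a simplicial set. -/
def SSet.NondegenerateSimplices (X : SSet.{u}) : Type u :=
  Σ n : ℕ, {x : X.obj (op ⦋n⦌) // ¬ X.IsDegenerateSimplex n x}

/-- A category is `κ`-filtered if every diagram indexed by a small category with fewer than
`κ` morphisms admits a cocone. -/
def IsCardinalFilteredCat (J : Type u) [SmallCategory J] (κ : Cardinal.{u}) : Prop :=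
  ∀ (K : Type u) (_ : SmallCategory K),
    Cardinal.mk (Σ (a : K) (b : K), a ⟶ b) < κ → ∀ F : K ⥤ J, Nonempty (Limits.Cocone F)

/-- A simplicial set `X` is `κ`-presentable (`κ`-compact) if `Hom(X, −)` preserves colimits
of all `κ`-filtered shapes. -/
def SSet.IsCardinalPresentable (X : SSet.{u}) (κ : Cardinal.{u}) : Prop :=
  ∀ (J : Type u) (_ : SmallCategory J), IsCardinalFilteredCat J κ →
    Nonempty (Limits.PreservesColimitsOfShape J (coyoneda.obj (op X)))

/-!
Order the nondegenerate simplices `X.N` of `X` by inclusion of the subcomplexes they generate.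
`X` is the colimit over `X.N` of these monogenous subcomplexes, which
are finite and hence finitely presentable; when `X.N` has fewer than `κ` elements this is a
colimit of fewer than `κ` `κ`-presentable objects, so `X` is `κ`-presentable. Conversely, `X` is
the `κ`-filtered union of its subcomplexes generated by fewer than `κ` nondegenerate simplices, so
if `X` is `κ`-presentable then `𝟙 X` factors through one of them. Every nondegenerate simplex then
lies below one of fewer than `κ` generators, each of which has only finitely many nondegenerate
faces.
-/

lemma isCardinalFilteredCat_iff_isCardinalFiltered (J : Type u) [SmallCategory J]
    (κ : Cardinal.{u}) [Fact κ.IsRegular] :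
    IsCardinalFilteredCat J κ ↔ IsCardinalFiltered J κ := by
  have hArrow (K : Type u) [SmallCategory K] :
      HasCardinalLT (Arrow K) κ ↔ Cardinal.mk (Σ (a b : K), a ⟶ b) < κ := by
    rw [hasCardinalLT_iff_of_equiv (Arrow.equivSigma K), hasCardinalLT_iff_cardinal_mk_lt]
  exact ⟨fun h ↦ ⟨fun F hA ↦ h _ _ ((hArrow _).1 hA) F⟩,
    fun h K _ hK F ↦ IsCardinalFiltered.nonempty_cocone F ((hArrow K).2 hK)⟩

namespace SSet

lemma isCardinalPresentable_iff_isCardinalAccessible (X : SSet.{u}) (κ : Cardinal.{u})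
    [Fact κ.IsRegular] :
    X.IsCardinalPresentable κ ↔ (coyoneda.obj (op X)).IsCardinalAccessible κ := by
  simp only [SSet.IsCardinalPresentable, isCardinalFilteredCat_iff_isCardinalFiltered]
  exact ⟨fun h ↦ ⟨fun J _ _ ↦ (h J _ ‹_›).some⟩,
    fun _ J _ _ ↦ ⟨Functor.preservesColimitsOfShape_of_isCardinalAccessible _ κ J⟩⟩

def nondegenerateSimplicesEquivN (X : SSet.{u}) : X.NondegenerateSimplices ≃ X.N where
  toFun x := N.mk x.2.1 fun ⟨m, hm, f, y, hy⟩ ↦ x.2.2 ⟨m, hm, f, y, hy.symm⟩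
  invFun x := ⟨x.dim, x.simplex, fun ⟨m, hm, f, y, hy⟩ ↦ x.nonDegenerate ⟨m, hm, f, y, hy.symm⟩⟩
  left_inv _ := rfl
  right_inv _ := rfl

variable {X : SSet.{u}} {κ : Cardinal.{u}} [Fact κ.IsRegular]

lemma N.finite_Iic (x : X.N) : (Set.Iic x).Finite := by
  let face (p : Σ m : Fin (x.dim + 1), (⦋(m : ℕ)⦌ ⟶ ⦋x.dim⦌)) : X.S :=
    S.mk (X.map p.2.op x.simplex)
  refine ((Set.finite_range face).preimage
    (fun y _ z _ h ↦ (N.ext_iff y z).2 h)).subset fun y hy ↦ ?_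
  obtain ⟨f, -, hf⟩ := N.le_iff_exists_mono.1 hy
  exact ⟨⟨⟨y.dim, Nat.lt_succ_of_le (N.dim_le_of_le hy)⟩, f⟩, by simp [face, hf]⟩

lemma N.hasCardinalLT_of_isCofinal {A : Set X.N} (hA : IsCofinal A) (hAκ : HasCardinalLT A κ) :
    HasCardinalLT X.N κ := by
  have hunion : HasCardinalLT (⋃ x : A, Set.Iic (x : X.N)) κ :=
    hasCardinalLT_iUnion _ hAκ fun x ↦
      have := x.1.finite_Iic.to_subtype
      hasCardinalLT_of_finite _ _ (Fact.out : κ.IsRegular).aleph0_le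
  refine hunion.of_injective (fun y ↦ ⟨y, ?_⟩) fun y z h ↦ congrArg Subtype.val h
  obtain ⟨x, hx, hyx⟩ := hA y
  exact Set.mem_iUnion.2 ⟨⟨x, hx⟩, hyx⟩

lemma isCardinalPresentable_of_hasCardinalLT_N (hX : HasCardinalLT X.N κ) :
    CategoryTheory.IsCardinalPresentable X κ := by
  have hArrow : HasCardinalLT (Arrow X.N) κ :=
    (hasCardinalLT_prod (Fact.out : κ.IsRegular).aleph0_le hX hX).of_injective
      (fun f ↦ (f.left, f.right)) fun f g h ↦
        Arrow.ext (congrArg Prod.fst h) (congrArg Prod.snd h) (Subsingleton.elim _ _)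
  have (x : X.N) : CategoryTheory.IsCardinalPresentable (X.functorN.obj x) κ := by
    have : (X.functorN.obj x).Finite := by
      change (Subcomplex.ofSimplex x.simplex : SSet).Finite
      rw [← Equiv.apply_symm_apply yonedaEquiv x.simplex, ← Subcomplex.range_eq_ofSimplex]
      infer_instance
    have := Cardinal.fact_isRegular_aleph0.{u}
    exact isCardinalPresentable_of_le _ (Fact.out : κ.IsRegular).aleph0_le
  exact isCardinalPresentable_of_isColimit' _ X.isColimitCoconeN κ hArrow

lemma exists_isCofinal_hasCardinalLT_N [CategoryTheory.IsCardinalPresentable X κ] :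
    ∃ A : Set X.N, IsCofinal A ∧ HasCardinalLT A κ := by
  let G : HasCardinalLT.Set X.N κ ⥤ X.Subcomplex :=
    Monotone.functor (f := fun A ↦ ⨆ x : A.1, (x : X.N).subcomplex)
      fun A B hAB ↦ iSup_le fun x ↦ le_iSup_of_le ⟨x, hAB x.2⟩ le_rfl
  let hG := Preorder.colimitCoconeOfIsLUB G isLUB_iSup
  have htop : Subcomplex.range (𝟙 X) ≤ ⨆ A, G.obj A := by
    refine le_top.trans (N.iSup_subcomplex_eq_top X ▸ iSup_le fun x ↦ ?_)
    exact le_iSup_of_le ⟨{x}, hasCardinalLT_of_finite _ _ (Fact.out : κ.IsRegular).aleph0_le⟩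
      (le_iSup_of_le ⟨x, rfl⟩ le_rfl)
  obtain ⟨A, f, hf⟩ := IsCardinalPresentable.exists_hom_of_isColimit κ
    (isColimitOfPreserves Subcomplex.toSSetFunctor hG.isColimit) (Subcomplex.lift (𝟙 X) htop)
  have hsection : f ≫ (G.obj A).ι = 𝟙 X := hf =≫ Subcomplex.ι _
  refine ⟨A.1, fun y ↦ ?_, A.2⟩
  have hy : y.simplex ∈ (⨆ x : A.1, (x : X.N).subcomplex).obj _ := by
    have := ConcreteCategory.congr_hom (NatTrans.congr_app hsection _) y.simplex
    simp only [Functor.comp_obj, NatTrans.id_app, id_apply] at this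
    exact this ▸ (f.app _ y.simplex).2
  rw [Subfunctor.iSup_obj, Set.mem_iUnion] at hy
  obtain ⟨x, hx⟩ := hy
  exact ⟨x, x.2, (Subcomplex.ofSimplex_le_iff _ _).2 hx⟩

variable (X κ) in
lemma isCardinalPresentable_iff_hasCardinalLT_N :
    CategoryTheory.IsCardinalPresentable X κ ↔ HasCardinalLT X.N κ := by
  refine ⟨fun _ ↦ ?_, isCardinalPresentable_of_hasCardinalLT_N⟩
  obtain ⟨A, hA, hAκ⟩ := exists_isCofinal_hasCardinalLT_N (X := X) (κ := κ)
  exact N.hasCardinalLT_of_isCofinal hA hAκ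

end SSet

theorem sset_isCardinalPresentable_iff_nondegenerate_lt_general
    (X : SSet.{u}) (κ : Cardinal.{u}) (hreg : κ.IsRegular) :
    X.IsCardinalPresentable κ ↔ Cardinal.mk X.NondegenerateSimplices < κ := by
  have : Fact κ.IsRegular := ⟨hreg⟩
  rw [X.isCardinalPresentable_iff_isCardinalAccessible,
    Cardinal.mk_congr X.nondegenerateSimplicesEquivN, ← hasCardinalLT_iff_cardinal_mk_lt]
  exact X.isCardinalPresentable_iff_hasCardinalLT_N κ

/-- A simplicial set is `κ`-presentable, for `κ` a regular uncountable cardinal, if and only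
if its set of nondegenerate simplices has cardinality `< κ`. -/
theorem sset_isCardinalPresentable_iff_nondegenerate_lt
    (X : SSet.{u}) (κ : Cardinal.{u}) (hreg : κ.IsRegular) (hκ : Cardinal.aleph0 < κ) :
    X.IsCardinalPresentable κ ↔ Cardinal.mk X.NondegenerateSimplices < κ :=
  sset_isCardinalPresentable_iff_nondegenerate_lt_general X κ hreg
end

section
/- For any simplicial set X and natural number n, there is a pushout square of simplicial sets in which the n-skeleton sk_{n-1} X receives a map from the coproduct ∐_{L_n X} ∂Δⁿ indexed by the set L_n X of nondegenerate n-simplices of X, mapped via attaching maps, the top map is the coproduct of boundary inclusions ∐_{L_n X} ∂Δⁿ ↪ ∐_{L_n X} Δⁿ, and the pushout is sk_n X; moreover X is the colimit of the countable sequence of skeleton inclusions sk_0 X ↪ sk_1 X ↪ sk_2 X ↪ ⋯. -/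
open CategoryTheory CategoryTheory.Limits Opposite Simplicial

universe u

namespace SkeletalDecomposition

/-- A simplex of `X` belongs to the `n`-skeleton of `X` if it is the image under a
simplicial operator of a simplex of dimension at most `n`. -/
def MemSk (X : SSet.{u}) (n : ℕ) (m : SimplexCategoryᵒᵖ) (x : X.obj m) : Prop :=
  ∃ (k : ℕ) (_ : k ≤ n) (f : m.unop ⟶ ⦋k⦌) (y : X.obj (op ⦋k⦌)), x = X.map f.op y

lemma memSk_map {X : SSet.{u}} {n : ℕ} {m m' : SimplexCategoryᵒᵖ} (g : m ⟶ m')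
    {x : X.obj m} (h : MemSk X n m x) : MemSk X n m' (X.map g x) := by
  obtain ⟨k, hk, f, y, rfl⟩ := h
  refine ⟨k, hk, g.unop ≫ f, y, ?_⟩
  rw [op_comp, Quiver.Hom.op_unop, FunctorToTypes.map_comp_apply]

lemma memSk_mono {X : SSet.{u}} {n n' : ℕ} (h : n ≤ n') {m : SimplexCategoryᵒᵖ}
    {x : X.obj m} : MemSk X n m x → MemSk X n' m x := by
  rintro ⟨k, hk, f, y, hy⟩
  exact ⟨k, hk.trans h, f, y, hy⟩

/-- The `n`-skeleton of a simplicial set, as a simplicial set. -/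
def sk (X : SSet.{u}) (n : ℕ) : SSet.{u} where
  obj m := {x : X.obj m // MemSk X n m x}
  map g := TypeCat.ofHom fun x => ⟨X.map g x.1, memSk_map g x.2⟩
  map_id m := by
    ext x
    exact FunctorToTypes.map_id_apply X x.1
  map_comp f g := by
    ext x
    exact FunctorToTypes.map_comp_apply X f g x.1

/-- The inclusion `sk_n X ↪ sk_{n+1} X`. -/
def skIncl (X : SSet.{u}) (n : ℕ) : sk X n ⟶ sk X (n + 1) where
  app m := TypeCat.ofHom fun x => ⟨x.1, memSk_mono (Nat.le_succ n) x.2⟩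
  naturality _ _ _ := rfl

/-- The tower of skeleta of `X`, as a functor `ℕ ⥤ SSet`. -/
def skFunctor (X : SSet.{u}) : ℕ ⥤ SSet.{u} where
  obj n := sk X n
  map {a b} h := { app := fun m => TypeCat.ofHom fun x => ⟨x.1, memSk_mono (leOfHom h) x.2⟩,
                   naturality := fun _ _ _ => rfl }
  map_id _ := rfl
  map_comp _ _ := rfl

/-- The cocone of skeleton inclusions `sk_n X ↪ X`. -/
def skCocone (X : SSet.{u}) : Cocone (skFunctor X) where
  pt := X
  ι := { app := fun n => { app := fun m => TypeCat.ofHom fun x => x.1, naturality := fun _ _ _ => rfl }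
         naturality := fun a b h => rfl }

/-- A simplex is degenerate if it is the image of a lower-dimensional simplex. -/
def IsDegenerate (X : SSet.{u}) (n : ℕ) (x : X.obj (op ⦋n⦌)) : Prop :=
  ∃ (m : ℕ) (_ : m < n) (f : (⦋n⦌ : SimplexCategory) ⟶ ⦋m⦌) (y : X.obj (op ⦋m⦌)),
    x = X.map f.op y

/-- The set of nondegenerate `n`-simplices of `X`. -/
def L (X : SSet.{u}) (n : ℕ) : Type u := {x : X.obj (op ⦋n⦌) // ¬ IsDegenerate X n x}

/-- The attaching map `Δ[n+1] ⟶ sk_{n+1} X` corresponding to a nondegenerate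
`(n+1)`-simplex. -/
noncomputable def attachCell (X : SSet.{u}) (n : ℕ) (i : L X (n + 1)) :
    Δ[n + 1] ⟶ sk X (n + 1) :=
  (SSet.yonedaEquiv (X := sk X (n + 1)) (n := ⦋n + 1⦌)).symm
    ⟨i.1, ⟨n + 1, le_refl _, 𝟙 _, i.1, by simp⟩⟩

/-- The restriction of the attaching map to the boundary, landing in the `n`-skeleton. -/
def attachBoundary (X : SSet.{u}) (n : ℕ) (i : L X (n + 1)) :
    (∂Δ[n + 1] : SSet.{u}) ⟶ sk X n where
  app m := TypeCat.ofHom fun α =>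
    ⟨X.map ((SSet.stdSimplex.objEquiv (n := ⦋n + 1⦌) (m := m)) α.1).op i.1, by
      obtain ⟨j, θ', hθ⟩ := SimplexCategory.eq_comp_δ_of_not_surjective
        ((SSet.stdSimplex.objEquiv (n := ⦋n + 1⦌) (m := m)) α.1) α.2
      refine ⟨n, le_refl n, θ', X.map (SimplexCategory.δ j).op i.1, ?_⟩
      rw [hθ, op_comp, FunctorToTypes.map_comp_apply]⟩
  naturality m m' g := by
    ext α
    apply Subtype.ext
    show X.map ((SSet.stdSimplex.objEquiv (n := ⦋n + 1⦌) (m := m')) (Δ[n + 1].map g α.1)).op i.1 =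
      X.map g (X.map ((SSet.stdSimplex.objEquiv (n := ⦋n + 1⦌) (m := m)) α.1).op i.1)
    rw [SSet.stdSimplex.map_apply, Equiv.apply_symm_apply, op_comp,
      Quiver.Hom.op_unop, FunctorToTypes.map_comp_apply]

/-- The map `∐ ∂Δ[n+1] ⟶ ∐ Δ[n+1]` given by the coproduct of boundary inclusions. -/
noncomputable def attachTop (X : SSet.{u}) (n : ℕ) :
    (∐ fun _ : L X (n + 1) => (∂Δ[n + 1] : SSet.{u})) ⟶ (∐ fun _ : L X (n + 1) => Δ[n + 1]) :=
  Limits.Sigma.map fun _ => (∂Δ[n + 1]).ι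

/-- The left vertical map of the attaching square. -/
noncomputable def attachLeft (X : SSet.{u}) (n : ℕ) :
    (∐ fun _ : L X (n + 1) => (∂Δ[n + 1] : SSet.{u})) ⟶ sk X n :=
  Limits.Sigma.desc (attachBoundary X n)

/-- The right vertical map of the attaching square. -/
noncomputable def attachRight (X : SSet.{u}) (n : ℕ) :
    (∐ fun _ : L X (n + 1) => Δ[n + 1]) ⟶ sk X (n + 1) :=
  Limits.Sigma.desc (attachCell X n)

/-!
Mathlib's `X.skeleton (n + 1)` is spanned by the nondegenerate simplices of dimension `< n + 1`,
so it has the same simplices as `sk X n`, and `L X n` is Mathlib's `X.nonDegenerate n`. Under these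
identifications the attaching square becomes the square `relativeCellComplexOfMono.isPushout` of
the cell structure on the monomorphism `∅ ⟶ X`, which is a pushout by the Eilenberg–Zilber lemma:
a simplex of `sk_{n+1} X` outside `sk_n X` is `X.map σ.op y` for a unique epimorphism `σ` and a
unique nondegenerate `(n+1)`-simplex `y`. The colimit is checked degreewise, where it is a union:
every `m`-simplex already lies in `sk_m X`.
-/

open SSet relativeCellComplexOfMono

section

variable (X : SSet.{u})

lemma memSk_iff_mem_skeleton (n : ℕ) {m : SimplexCategoryᵒᵖ} (x : X.obj m) :
    MemSk X n m x ↔ x ∈ (X.skeleton (n + 1)).obj m := by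
  constructor
  · rintro ⟨k, hk, f, y, rfl⟩
    exact (X.skeleton (n + 1)).map f.op (X.mem_skeleton y)
  · induction m using Opposite.rec with | _ m
    induction m using SimplexCategory.rec with | _ d
    intro hx
    obtain ⟨j, f, _, y, rfl⟩ := X.exists_nonDegenerate x
    have hy : y.1 ∈ (X.skeleton (n + 1)).obj _ := by
      rwa [← Subcomplex.ofSimplex_le_iff, ← Subcomplex.ofSimplex_map_of_epi f,
        Subcomplex.ofSimplex_le_iff]
    rw [mem_skeleton_obj_iff_of_nonDegenerate] at hy
    exact ⟨j, by omega, f, y, rfl⟩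

lemma not_isDegenerate_iff {n : ℕ} (x : X _⦋n⦌) :
    ¬ IsDegenerate X n x ↔ x ∈ X.nonDegenerate n := by
  simp only [IsDegenerate, nonDegenerate, degenerate, Set.mem_compl_iff, Set.mem_range, eq_comm]
  rfl

lemma skeletonOfMono_bot : skeletonOfMono (⊥ : X.Subcomplex).ι = X.skeleton :=
  OrderHom.ext _ _ (funext fun n => by simp [skeletonOfMono])

lemma exists_memSk {m : SimplexCategoryᵒᵖ} (x : X.obj m) : ∃ n, MemSk X n m x := by
  induction m using Opposite.rec with | _ m
  induction m using SimplexCategory.rec with | _ d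
  exact ⟨d, d, le_rfl, 𝟙 _, x, by simp⟩

variable (n : ℕ)

def skIsoSkeletonOfMono : sk X n ≅ (skeletonOfMono (⊥ : X.Subcomplex).ι (n + 1) : SSet.{u}) :=
  NatIso.ofComponents (fun m => (Equiv.subtypeEquivRight fun x => by
    rw [skeletonOfMono_bot, memSk_iff_mem_skeleton]).toIso) (fun _ => rfl)

def nonDegenerateEquivCell : L X n ≃ Cell (⊥ : X.Subcomplex).ι n where
  toFun x := ⟨x.1, (not_isDegenerate_iff X x.1).1 x.2, by simp⟩
  invFun c := ⟨c.simplex, (not_isDegenerate_iff X c.simplex).2 c.nonDegenerate⟩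

lemma isPushout_attach :
    IsPushout (attachLeft X n) (attachTop X n) (skIncl X n) (attachRight X n) := by
  refine (isPushout (⊥ : X.Subcomplex).ι (n + 1)).of_iso'
    (Sigma.whiskerEquiv (nonDegenerateEquivCell X (n + 1))
      fun _ => Iso.refl (∂Δ[n + 1] : SSet.{u}))
    (skIsoSkeletonOfMono X n)
    (Sigma.whiskerEquiv (nonDegenerateEquivCell X (n + 1)) fun _ => Iso.refl Δ[n + 1])
    (skIsoSkeletonOfMono X (n + 1)) ?_ ?_ rfl ?_
  · ext y : 1
    simp only [Sigma.whiskerEquiv_hom, Sigma.ι_comp_map'_assoc, Iso.refl_inv, Category.id_comp,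
      attachLeft, Sigma.ι_desc, Sigma.ι_desc_assoc]
    rfl
  · ext y : 1
    simp only [Sigma.whiskerEquiv_hom, Sigma.ι_comp_map'_assoc, Iso.refl_inv, Category.id_comp,
      attachTop, Sigma.ι_map, Sigma.ι_map_assoc, Sigma.ι_comp_map']
  · ext y : 1
    simp only [Sigma.whiskerEquiv_hom, Sigma.ι_comp_map'_assoc, Iso.refl_inv, Category.id_comp,
      attachRight, Sigma.ι_desc, Sigma.ι_desc_assoc]
    rfl

noncomputable def isColimitSkCocone : IsColimit (skCocone X) :=
  evaluationJointlyReflectsColimits _ fun _ => Types.FilteredColimit.isColimitOf _ _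
    (fun x => (exists_memSk X x).elim fun n hx => ⟨n, ⟨x, hx⟩, rfl⟩)
    (fun i j _ _ h =>
      ⟨max i j, homOfLE (le_max_left i j), homOfLE (le_max_right i j), Subtype.ext h⟩)

end

/-- The skeletal decomposition of a simplicial set: for every `n`, the square attaching the
nondegenerate `(n+1)`-simplices along their boundaries is a pushout
```
∐ ∂Δ[n+1] ⟶ ∐ Δ[n+1]
   ↓             ↓
 sk_n X  ⟶  sk_{n+1} X
```
and, moreover, `X` is the colimit of the countable sequence of skeleton inclusions
`sk_0 X ↪ sk_1 X ↪ sk_2 X ↪ ⋯`. -/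
theorem skeletal_decomposition (X : SSet.{u}) :
    (∀ n : ℕ,
      IsPushout (attachLeft X n) (attachTop X n) (skIncl X n) (attachRight X n)) ∧
    Nonempty (IsColimit (skCocone X)) :=
  ⟨isPushout_attach X, ⟨isColimitSkCocone X⟩⟩

end SkeletalDecomposition
end

section
/- Let C be a category, let P be a simplicial-set–style pushout of index categories realized as follows: suppose a diagram d in C is indexed by a category P which is the pushout of categories Z ← X → Y along functors, and suppose C-valued restricted diagrams d_X, d_Y, d_Z admit limits ℓ_X, ℓ_Y, ℓ_Z respectively, with canonical comparison morphisms ℓ_Y → ℓ_X ← ℓ_Z induced by restriction of cones. If the cospan ℓ_Y → ℓ_X ← ℓ_Z admits a pullback ℓ in C, then ℓ is a limit of the diagram d : P ⥤ C, provided the pushout square of categories induces an isomorphism of cone categories Cone(d) ≅ Cone(d_Z) ×_{Cone(d_X)} Cone(d_Y). -/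
open CategoryTheory CategoryTheory.Limits

universe v u v' u'

/-!
A cone over `d` with apex `A` is the same as a pair of cones over `jY ⋙ d` and `jZ ⋙ d` with
apex `A` that agree over `X`. Since `cY`, `cZ`, `cX` are limits, such a pair is a pair of maps
`A ⟶ cY.pt`, `A ⟶ cZ.pt` with equal composites to `cX.pt`, that is, a map `A ⟶ pb`. Hence the
cone over `d` glued from `π₁` and `π₂` is terminal.
-/

theorem CategoryTheory.IsPullback.existsUnique_lift {C : Type*} [Category C] {P X Y Z : C}
    {fst : P ⟶ X} {snd : P ⟶ Y} {f : X ⟶ Z} {g : Y ⟶ Z} (hP : IsPullback fst snd f g) {W : C}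
    {h : W ⟶ X} {k : W ⟶ Y} (w : h ≫ f = k ≫ g) : ∃! l : W ⟶ P, l ≫ fst = h ∧ l ≫ snd = k :=
  ⟨hP.lift h k w, ⟨hP.lift_fst h k w, hP.lift_snd h k w⟩,
    fun _ hl => hP.hom_ext (by rw [hl.1, hP.lift_fst]) (by rw [hl.2, hP.lift_snd])⟩

namespace CategoryTheory.Limits

section

variable {J K C : Type*} [Category J] [Category K] [Category C] {F : J ⥤ C}

theorem Cone.extend_eq_iff {c s : Cone F} (m : s.pt ⟶ c.pt) :
    c.extend m = s ↔ ∀ j, m ≫ c.π.app j = s.π.app j := by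
  obtain ⟨pt, π⟩ := s
  constructor
  · intro h j
    injection h with _ hπ
    exact congrArg (NatTrans.app · j) hπ
  · intro h
    change Cone.mk pt _ = Cone.mk pt π
    congr 1
    ext j
    simpa using h j

theorem IsLimit.extend_eq_iff_eq_lift {t : Cone F} (ht : IsLimit t) {s : Cone F}
    (m : s.pt ⟶ t.pt) : t.extend m = s ↔ m = ht.lift s :=
  (Cone.extend_eq_iff m).trans ⟨ht.uniq s m, fun h => h ▸ ht.fac s⟩

theorem IsLimit.whisker_extend_eq_iff {E : K ⥤ J} {c : Cone F} {t : Cone (E ⋙ F)}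
    (ht : IsLimit t) {p : c.pt ⟶ t.pt} (hp : t.extend p = c.whisker E) {s : Cone F}
    (m : s.pt ⟶ c.pt) :
    (c.extend m).whisker E = s.whisker E ↔ m ≫ p = ht.lift (s.whisker E) := by
  rw [← ht.extend_eq_iff_eq_lift (s := s.whisker E) (m ≫ p)]
  refine (Cone.extend_eq_iff (c := c.whisker E) (s := s.whisker E) m).trans ?_
  rw [Cone.extend_eq_iff]
  have hp' := (Cone.extend_eq_iff (s := c.whisker E) p).1 hp
  simp only [Category.assoc, hp']

theorem Cone.π_app_comp_eqToHom (c : Cone F) {j j' : J} (h : j = j') :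
    c.π.app j ≫ eqToHom (congrArg F.obj h) = c.π.app j' := by
  subst h
  simp

end

section PushoutOfIndexCategories

variable {C : Type u} [Category.{v} C] {X Y Z P : Type u'} [Category.{v'} X] [Category.{v'} Y]
  [Category.{v'} Z] [Category.{v'} P] {iY : X ⥤ Y} {iZ : X ⥤ Z} {jY : Y ⥤ P} {jZ : Z ⥤ P}
  {d : P ⥤ C}

/-- `(c₁, c₂)` is an object of `Cone(d_Y) ×_{Cone(d_X)} Cone(d_Z)`. -/
def AgreeOnOverlap (hsq : iY ⋙ jY = iZ ⋙ jZ) (c₁ : Cone (jY ⋙ d)) (c₂ : Cone (jZ ⋙ d))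
    (hpt : c₁.pt = c₂.pt) : Prop :=
  ∀ x : X, c₁.π.app (iY.obj x) =
    eqToHom hpt ≫ c₂.π.app (iZ.obj x) ≫ eqToHom (congrArg d.obj (Functor.congr_obj hsq x).symm)

theorem agreeOnOverlap_whisker (hsq : iY ⋙ jY = iZ ⋙ jZ) (c : Cone d) :
    AgreeOnOverlap hsq (c.whisker jY) (c.whisker jZ) rfl := fun x => by
  simpa using (c.π_app_comp_eqToHom (Functor.congr_obj hsq x).symm).symm

theorem agreeOnOverlap_extend (hsq : iY ⋙ jY = iZ ⋙ jZ) {cY : Cone (jY ⋙ d)}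
    {cZ : Cone (jZ ⋙ d)} {cX : Cone (iY ⋙ jY ⋙ d)} {u : cY.pt ⟶ cX.pt} {v : cZ.pt ⟶ cX.pt}
    (hu : ∀ x : X, u ≫ cX.π.app x = cY.π.app (iY.obj x))
    (hv : ∀ x : X, v ≫ cX.π.app x =
      cZ.π.app (iZ.obj x) ≫ eqToHom (congrArg d.obj (Functor.congr_obj hsq x).symm))
    {A : C} {a : A ⟶ cY.pt} {b : A ⟶ cZ.pt} (hab : a ≫ u = b ≫ v) :
    AgreeOnOverlap hsq (cY.extend a) (cZ.extend b) rfl := fun x => by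
  simp only [Cone.extend_π, NatTrans.comp_app, Functor.const_map_app, eqToHom_refl,
    Category.id_comp, Category.assoc, ← hu, reassoc_of% hab, hv]

theorem eq_of_whisker_eq_of_whisker_eq (hsq : iY ⋙ jY = iZ ⋙ jZ)
    (hcones : ∀ (c₁ : Cone (jY ⋙ d)) (c₂ : Cone (jZ ⋙ d)) (hpt : c₁.pt = c₂.pt),
      AgreeOnOverlap hsq c₁ c₂ hpt → ∃! c : Cone d, c.whisker jY = c₁ ∧ c.whisker jZ = c₂)
    {c c' : Cone d} (hY : c.whisker jY = c'.whisker jY) (hZ : c.whisker jZ = c'.whisker jZ) :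
    c = c' :=
  (hcones _ _ rfl (agreeOnOverlap_whisker hsq c')).unique ⟨hY, hZ⟩ ⟨rfl, rfl⟩

theorem lift_whisker_comp_eq_lift_whisker_comp (hsq : iY ⋙ jY = iZ ⋙ jZ)
    {cY : Cone (jY ⋙ d)} (hY : IsLimit cY) {cZ : Cone (jZ ⋙ d)} (hZ : IsLimit cZ)
    {cX : Cone (iY ⋙ jY ⋙ d)} (hX : IsLimit cX) {u : cY.pt ⟶ cX.pt} {v : cZ.pt ⟶ cX.pt}
    (hu : ∀ x : X, u ≫ cX.π.app x = cY.π.app (iY.obj x))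
    (hv : ∀ x : X, v ≫ cX.π.app x =
      cZ.π.app (iZ.obj x) ≫ eqToHom (congrArg d.obj (Functor.congr_obj hsq x).symm))
    (s : Cone d) : hY.lift (s.whisker jY) ≫ u = hZ.lift (s.whisker jZ) ≫ v :=
  hX.hom_ext fun x => by
    simp only [Category.assoc, hu, hv, IsLimit.fac_assoc, IsLimit.fac]
    simpa using agreeOnOverlap_whisker hsq s x

end PushoutOfIndexCategories

end CategoryTheory.Limits

/-- Inductive construction of limits over a pushout of index categories: if the index
category `P` is a pushout of categories `Z ⟵ X ⟶ Y` (with `jY : Y ⥤ P`, `jZ : Z ⥤ P`,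
`iY ⋙ jY = iZ ⋙ jZ`), a diagram `d : P ⥤ C` restricts to diagrams with limit cones
`cY`, `cZ`, `cX`, the canonical comparison morphisms `u : cY.pt ⟶ cX.pt`,
`v : cZ.pt ⟶ cX.pt` are induced by restriction of cones, the cospan `u, v` admits a
pullback `pb` in `C`, and cones over `d` correspond to compatible pairs of cones over the
restrictions to `Y` and `Z` (the pushout square induces an isomorphism
`Cone(d) ≅ Cone(d_Z) ×_{Cone(d_X)} Cone(d_Y)`), then `pb` is a limit of `d`. -/
theorem limit_of_pushout_of_index_categories
    {C : Type u} [Category.{v} C]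
    {X Y Z P : Type u'} [Category.{v'} X] [Category.{v'} Y] [Category.{v'} Z]
    [Category.{v'} P]
    (iY : X ⥤ Y) (iZ : X ⥤ Z) (jY : Y ⥤ P) (jZ : Z ⥤ P)
    (hsq : iY ⋙ jY = iZ ⋙ jZ)
    (d : P ⥤ C)
    -- limits of the restricted diagrams
    (cY : Cone (jY ⋙ d)) (hY : IsLimit cY)
    (cZ : Cone (jZ ⋙ d)) (hZ : IsLimit cZ)
    (cX : Cone (iY ⋙ jY ⋙ d)) (hX : IsLimit cX)
    -- the canonical comparison morphisms, characterised by compatibility with the cones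
    (u : cY.pt ⟶ cX.pt) (hu : ∀ x : X, u ≫ cX.π.app x = cY.π.app (iY.obj x))
    (v : cZ.pt ⟶ cX.pt)
    (hv : ∀ x : X, v ≫ cX.π.app x =
      cZ.π.app (iZ.obj x) ≫
        eqToHom (congrArg d.obj (Functor.congr_obj hsq x).symm))
    -- the pullback of the comparison cospan
    {pb : C} (π₁ : pb ⟶ cY.pt) (π₂ : pb ⟶ cZ.pt) (hpb : IsPullback π₁ π₂ u v)
    -- cones over `d` correspond to compatible pairs of cones over the restrictions
    (hcones : ∀ (c₁ : Cone (jY ⋙ d)) (c₂ : Cone (jZ ⋙ d)) (hpt : c₁.pt = c₂.pt),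
      (∀ x : X, c₁.π.app (iY.obj x) =
          eqToHom hpt ≫ c₂.π.app (iZ.obj x) ≫
            eqToHom (congrArg d.obj (Functor.congr_obj hsq x).symm)) →
        ∃! c : Cone d, Cone.whisker jY c = c₁ ∧ Cone.whisker jZ c = c₂) :
    ∃ c : Cone d, c.pt = pb ∧ Nonempty (IsLimit c) := by
  obtain ⟨c, ⟨hcY, hcZ⟩, -⟩ :=
    hcones (cY.extend π₁) (cZ.extend π₂) rfl (agreeOnOverlap_extend hsq hu hv hpb.w)
  obtain rfl : c.pt = pb := congrArg Cone.pt hcY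
  have extend_eq_iff (s : Cone d) (m : s.pt ⟶ c.pt) :
      c.extend m = s ↔ m ≫ π₁ = hY.lift (s.whisker jY) ∧ m ≫ π₂ = hZ.lift (s.whisker jZ) := by
    rw [← hY.whisker_extend_eq_iff hcY.symm, ← hZ.whisker_extend_eq_iff hcZ.symm]
    exact ⟨fun h => ⟨congrArg _ h, congrArg _ h⟩,
      fun h => eq_of_whisker_eq_of_whisker_eq hsq hcones h.1 h.2⟩
  refine ⟨c, rfl, ⟨IsLimit.ofExistsUnique fun s => ?_⟩⟩
  simp only [← Cone.extend_eq_iff, extend_eq_iff]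
  exact hpb.existsUnique_lift (lift_whisker_comp_eq_lift_whisker_comp hsq hY hZ hX hu hv s)
end

section
/- In the 2-category Cat: given functors g : C ⥤ A and f : B ⥤ A, a functor ℓ : C ⥤ B and a natural transformation λ : f ∘ ℓ ⟶ g form an absolute right lifting of g through f if and only if for every object c of C and every object b of B, pasting with λ gives a bijection between morphisms b ⟶ ℓ c in B and morphisms f b ⟶ g c in A, i.e. the induced functor from the comma category (B ↓ ℓ) to the comma category (f ↓ g) over C × B is an isomorphism of categories. -/
open CategoryTheory

universe v₁ v₂ v₃ v₄ u₁ u₂ u₃ u₄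

variable {A : Type u₁} [Category.{v₁} A] {B : Type u₂} [Category.{v₂} B]
  {C : Type u₃} [Category.{v₃} C]

/-- In the 2-category `Cat`, a natural transformation `lam : ℓ ⋙ f ⟶ g` is an *absolute right
lifting* of `g : C ⥤ A` through `f : B ⥤ A` if for all functors `c : X ⥤ C`, `b : X ⥤ B` and
natural transformations `α : b ⋙ f ⟶ c ⋙ g` there is a unique `ᾱ : b ⟶ c ⋙ ℓ` with
`α = (ᾱ ▷ f) ≫ (c ◁ lam)`. -/
def CatIsAbsRightLifting (f : B ⥤ A) (g : C ⥤ A) (ℓ : C ⥤ B) (lam : ℓ ⋙ f ⟶ g) : Prop :=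
  ∀ (X : Type u₃) (_ : Category.{v₃} X) (c : X ⥤ C) (b : X ⥤ B) (α : b ⋙ f ⟶ c ⋙ g),
    ∃! abar : b ⟶ c ⋙ ℓ,
      α = Functor.whiskerRight abar f ≫ (Functor.associator c ℓ f).hom ≫ Functor.whiskerLeft c lam

/-- The canonical functor `(B ↓ ℓ) ⥤ (f ↓ g)` between comma categories induced by pasting
with `lam`, sending `(c, b, β : b ⟶ ℓ c)` to `(c, b, f β ≫ lam_c)`. -/
@[simps]
def commaFunctorOfCell (f : B ⥤ A) (g : C ⥤ A) (ℓ : C ⥤ B) (lam : ℓ ⋙ f ⟶ g) :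
    Comma (𝟭 B) ℓ ⥤ Comma f g where
  obj X := { left := X.left, right := X.right, hom := f.map X.hom ≫ lam.app X.right }
  map {X Y} φ :=
    { left := φ.left
      right := φ.right
      w := by
        have hw := φ.w
        dsimp at hw ⊢
        have hn := lam.naturality φ.right
        dsimp at hn
        rw [← Category.assoc, ← f.map_comp, hw, f.map_comp, Category.assoc, hn, Category.assoc] }

/-- Pointwise lifting property. -/
def CatPointwiseLifting (f : B ⥤ A) (g : C ⥤ A) (ℓ : C ⥤ B) (lam : ℓ ⋙ f ⟶ g) : Prop :=
  ∀ (b₀ : B) (c₀ : C) (α₀ : f.obj b₀ ⟶ g.obj c₀),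
    ∃! β : b₀ ⟶ ℓ.obj c₀, f.map β ≫ lam.app c₀ = α₀

/-- A unit category in the right universes. -/
abbrev CatUnitCat : Type u₃ := ULiftHom.{v₃} (ULift.{u₃} (Discrete PUnit.{1}))

lemma catPointwise_of_absRightLifting {f : B ⥤ A} {g : C ⥤ A} {ℓ : C ⥤ B} {lam : ℓ ⋙ f ⟶ g}
    (h : CatIsAbsRightLifting f g ℓ lam) : CatPointwiseLifting f g ℓ lam := by
  intro b₀ c₀ α₀
  let X : Type u₃ := CatUnitCat
  let pt : X := ULiftHom.objUp (ULift.up ⟨PUnit.unit⟩)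
  let c : X ⥤ C := (Functor.const X).obj c₀
  let b : X ⥤ B := (Functor.const X).obj b₀
  let α : b ⋙ f ⟶ c ⋙ g :=
    { app := fun _ => α₀
      naturality := by intros; simp [b, c] }
  obtain ⟨abar, habar, huniq⟩ := h X inferInstance c b α
  refine ⟨abar.app pt, ?_, ?_⟩
  · have := congrArg (fun t => NatTrans.app t pt) habar
    dsimp at this
    simp at this
    exact this.symm
  · intro β' hβ'
    let abar' : b ⟶ c ⋙ ℓ :=
      { app := fun _ => β'
        naturality := by intros; simp [b, c] }
    have heq : abar' = abar := by
      apply huniq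
      ext x
      simp [abar', α]
      exact hβ'.symm
    rw [← heq]

noncomputable def catPointwiseLift {f : B ⥤ A} {g : C ⥤ A} {ℓ : C ⥤ B} {lam : ℓ ⋙ f ⟶ g}
    (h : CatPointwiseLifting f g ℓ lam) {b₀ : B} {c₀ : C} (α₀ : f.obj b₀ ⟶ g.obj c₀) :
    b₀ ⟶ ℓ.obj c₀ :=
  (h b₀ c₀ α₀).exists.choose

lemma catPointwiseLift_spec {f : B ⥤ A} {g : C ⥤ A} {ℓ : C ⥤ B} {lam : ℓ ⋙ f ⟶ g}
    (h : CatPointwiseLifting f g ℓ lam) {b₀ : B} {c₀ : C} (α₀ : f.obj b₀ ⟶ g.obj c₀) :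
    f.map (catPointwiseLift h α₀) ≫ lam.app c₀ = α₀ :=
  (h b₀ c₀ α₀).exists.choose_spec

lemma catPointwiseLift_unique {f : B ⥤ A} {g : C ⥤ A} {ℓ : C ⥤ B} {lam : ℓ ⋙ f ⟶ g}
    (h : CatPointwiseLifting f g ℓ lam) {b₀ : B} {c₀ : C} (α₀ : f.obj b₀ ⟶ g.obj c₀)
    {β : b₀ ⟶ ℓ.obj c₀} (hβ : f.map β ≫ lam.app c₀ = α₀) : β = catPointwiseLift h α₀ :=
  ((h b₀ c₀ α₀).unique hβ (catPointwiseLift_spec h α₀))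

lemma catAbsRightLifting_of_pointwise {f : B ⥤ A} {g : C ⥤ A} {ℓ : C ⥤ B} {lam : ℓ ⋙ f ⟶ g}
    (h : CatPointwiseLifting f g ℓ lam) : CatIsAbsRightLifting f g ℓ lam := by
  intro X _ c b α
  refine ⟨{ app := fun x => catPointwiseLift h (α.app x), naturality := ?_ }, ?_, ?_⟩
  · intro x y φ
    have h1 : f.map (b.map φ ≫ catPointwiseLift h (α.app y)) ≫ lam.app (c.obj y)
        = α.app x ≫ g.map (c.map φ) := by
      rw [f.map_comp, Category.assoc, catPointwiseLift_spec h (α.app y)]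
      exact α.naturality φ
    have h2 : f.map (catPointwiseLift h (α.app x) ≫ ℓ.map (c.map φ)) ≫ lam.app (c.obj y)
        = α.app x ≫ g.map (c.map φ) := by
      rw [f.map_comp, Category.assoc]
      have hn := lam.naturality (c.map φ)
      dsimp at hn
      rw [hn, ← Category.assoc, catPointwiseLift_spec h (α.app x)]
    dsimp
    rw [catPointwiseLift_unique h _ h1, catPointwiseLift_unique h _ h2]
  · ext x
    simpa using (catPointwiseLift_spec h (α.app x)).symm
  · intro abar' hab
    ext x
    apply catPointwiseLift_unique h
    have := congrArg (fun t => NatTrans.app t x) hab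
    dsimp at this
    simp at this
    exact this.symm

noncomputable def catInvFunctor {f : B ⥤ A} {g : C ⥤ A} {ℓ : C ⥤ B} {lam : ℓ ⋙ f ⟶ g}
    (h : CatPointwiseLifting f g ℓ lam) : Comma f g ⥤ Comma (𝟭 B) ℓ where
  obj Z := { left := Z.left, right := Z.right, hom := catPointwiseLift h Z.hom }
  map {X Y} φ :=
    { left := φ.left
      right := φ.right
      w := by
        dsimp
        have h1 : f.map (φ.left ≫ catPointwiseLift h Y.hom) ≫ lam.app Y.right
            = X.hom ≫ g.map φ.right := by
          rw [f.map_comp, Category.assoc, catPointwiseLift_spec h Y.hom]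
          exact φ.w
        have h2 : f.map (catPointwiseLift h X.hom ≫ ℓ.map φ.right) ≫ lam.app Y.right
            = X.hom ≫ g.map φ.right := by
          rw [f.map_comp, Category.assoc]
          have hn := lam.naturality φ.right
          dsimp at hn
          rw [hn, ← Category.assoc, catPointwiseLift_spec h X.hom]
        rw [catPointwiseLift_unique h _ h1, catPointwiseLift_unique h _ h2] }

lemma comma2_hom_of_eq {ℓ : C ⥤ B} {X Y : Comma (𝟭 B) ℓ} (hXY : X = Y) :
    X.hom = eqToHom (by rw [hXY]) ≫ Y.hom ≫ eqToHom (by rw [hXY]) := by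
  subst hXY; simp

lemma exists_lift_of_obj_eq {f : B ⥤ A} {g : C ⥤ A} {ℓ : C ⥤ B} {lam : ℓ ⋙ f ⟶ g}
    {W : Comma (𝟭 B) ℓ} {Z : Comma f g} (h : (commaFunctorOfCell f g ℓ lam).obj W = Z) :
    ∃ β : Z.left ⟶ ℓ.obj Z.right, f.map β ≫ lam.app Z.right = Z.hom := by
  subst h; exact ⟨W.hom, rfl⟩

/-- `Cat`-instance of the comma-category characterisation of absolute right liftings:
`(ℓ, lam)` is an absolute right lifting of `g` through `f` if and only if the induced functor
`(B ↓ ℓ) ⥤ (f ↓ g)` is an isomorphism of categories. -/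
theorem catAbsRightLifting_iff_comma_iso
    (f : B ⥤ A) (g : C ⥤ A) (ℓ : C ⥤ B) (lam : ℓ ⋙ f ⟶ g) :
    CatIsAbsRightLifting f g ℓ lam ↔
      ∃ inv : Comma f g ⥤ Comma (𝟭 B) ℓ,
        commaFunctorOfCell f g ℓ lam ⋙ inv = 𝟭 (Comma (𝟭 B) ℓ) ∧
        inv ⋙ commaFunctorOfCell f g ℓ lam = 𝟭 (Comma f g) := by
  constructor
  · intro habs
    have h := catPointwise_of_absRightLifting habs
    refine ⟨catInvFunctor h, ?_, ?_⟩
    · refine CategoryTheory.Functor.ext ?_ ?_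
      · intro Z
        obtain ⟨l, r, γ⟩ := Z
        have hγ : catPointwiseLift h (f.map γ ≫ lam.app r) = γ :=
          (catPointwiseLift_unique h _ rfl).symm
        dsimp [catInvFunctor, commaFunctorOfCell]
        rw [hγ]
      · intro X Y φ
        ext
        · simp [catInvFunctor]
          erw [Comma.eqToHom_left, Comma.eqToHom_left]
          exact (by simp : φ.left = 𝟙 _ ≫ φ.left ≫ 𝟙 _)
        · simp [catInvFunctor]
          erw [Comma.eqToHom_right, Comma.eqToHom_right]
          exact (by simp : φ.right = 𝟙 _ ≫ φ.right ≫ 𝟙 _)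
    · refine CategoryTheory.Functor.ext ?_ ?_
      · intro Z
        obtain ⟨l, r, γ⟩ := Z
        have hγ : f.map (catPointwiseLift h γ) ≫ lam.app r = γ :=
          catPointwiseLift_spec h γ
        dsimp [catInvFunctor, commaFunctorOfCell]
        rw [hγ]
      · intro X Y φ
        ext
        · simp [catInvFunctor]
          erw [Comma.eqToHom_left, Comma.eqToHom_left]
          exact (by simp : φ.left = 𝟙 _ ≫ φ.left ≫ 𝟙 _)
        · simp [catInvFunctor]
          erw [Comma.eqToHom_right, Comma.eqToHom_right]
          exact (by simp : φ.right = 𝟙 _ ≫ φ.right ≫ 𝟙 _)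
  · rintro ⟨inv, h1, h2⟩
    apply catAbsRightLifting_of_pointwise
    intro b₀ c₀ α₀
    let Z : Comma f g := { left := b₀, right := c₀, hom := α₀ }
    have hobj : (commaFunctorOfCell f g ℓ lam).obj (inv.obj Z) = Z :=
      Functor.congr_obj h2 Z
    obtain ⟨β₀, hβ₀⟩ := exists_lift_of_obj_eq hobj
    refine ⟨β₀, hβ₀, ?_⟩
    intro β hβ
    have hW : (commaFunctorOfCell f g ℓ lam).obj ⟨b₀, c₀, β⟩
        = (commaFunctorOfCell f g ℓ lam).obj ⟨b₀, c₀, β₀⟩ := by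
      dsimp [commaFunctorOfCell]
      rw [hβ, hβ₀]
    have h' : (⟨b₀, c₀, β⟩ : Comma (𝟭 B) ℓ) = ⟨b₀, c₀, β₀⟩ := by
      have a1 := Functor.congr_obj h1 (⟨b₀, c₀, β⟩ : Comma (𝟭 B) ℓ)
      have a2 := Functor.congr_obj h1 (⟨b₀, c₀, β₀⟩ : Comma (𝟭 B) ℓ)
      simp only [Functor.comp_obj, Functor.id_obj] at a1 a2
      rw [← a1, ← a2, hW]
    have := comma2_hom_of_eq h'
    simpa using this
end
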